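/- arXiv:2405.02952 — 3 statements merged into one kernel-verified Lean document; each statement's English description precedes it below -/
import Mathlib

section
/- Let f, f̂ : ℝ^d → ℝ be differentiable at θ and let v be a random vector in ℝ^d whose scalar components v_i are independent with zero mean and unit variance. Then the second moment of the i-th component of the control variate forward gradient satisfies E[(h_v(θ))_i²] = (∂f/∂θ_i(θ) − ∂f̂/∂θ_i(θ))² · Var[v_i²] + ‖∇f(θ) − ∇f̂(θ)‖² + 2 (∂f/∂θ_i(θ))(∂f̂/∂θ_i(θ)) − (∂f̂/∂θ_i(θ))² for each i = 1, ..., d. -/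
open MeasureTheory ProbabilityTheory
open scoped RealInnerProductSpace

/-!
With `a = ∇f(θ) − ∇f̂(θ)` and `S = (a·v) v_i`, the `i`-th coordinate of `h_v(θ)` is
`S + ∂_i f̂(θ)`, so its second moment is `E[S²] + 2 ∂_i f̂(θ) E[S] + (∂_i f̂(θ))²`.
Expanding, `E[S] = ∑_j a_j E[v_j v_i] = a_i` and `E[S²] = ∑_{j,k} a_j a_k E[v_j v_k v_i²]`.
When `j ≠ k`, one of the two indices is distinct from the others, so by independence its zero
mean factors out and the moment vanishes; on the diagonal, `E[v_j² v_i²] = E[v_j²] E[v_i²] = 1`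
for `j ≠ i`, while `E[v_i⁴] = Var[v_i²] + 1`.
-/

instance ENNReal.holderTriple_four_four_two : ENNReal.HolderTriple 4 4 2 where
  inv_add_inv_eq_inv := by
    rw [show (4 : ENNReal) = 2 * 2 by norm_num, ENNReal.mul_inv (by simp) (by simp), ← mul_two,
      mul_assoc, ENNReal.inv_mul_cancel (by simp) (by simp), mul_one]

namespace ProbabilityTheory

variable {Ω ι : Type*} [MeasurableSpace Ω] {μ : Measure Ω} {X : ι → Ω → ℝ}

lemma iIndepFun.integral_mul_comp_eq_zero (hX : iIndepFun X μ)
    (hXm : ∀ j, AEMeasurable (X j) μ) {j k l : ι} (hjk : j ≠ k) (hjl : j ≠ l)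
    (hj : ∫ ω, X j ω ∂μ = 0) {g : ℝ × ℝ → ℝ} (hg : Measurable g) :
    ∫ ω, X j ω * g (X k ω, X l ω) ∂μ = 0 := by
  have hkl : AEMeasurable (fun ω => (X k ω, X l ω)) μ := (hXm k).prodMk (hXm l)
  have hind := ((hX.indepFun_prodMk₀ hXm k l j hjk.symm hjl.symm).comp₀ hkl (hXm j)
    hg.aemeasurable measurable_id.aemeasurable).symm
  simpa [hj] using hind.integral_mul_eq_mul_integral (hXm j).aestronglyMeasurable
    (hg.comp_aemeasurable hkl).aestronglyMeasurable

lemma iIndepFun.integral_mul_mul_sq_of_ne (hX : iIndepFun X μ)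
    (hXm : ∀ j, AEMeasurable (X j) μ) (hmean : ∀ j, ∫ ω, X j ω ∂μ = 0) {j k : ι} (i : ι)
    (hjk : j ≠ k) :
    ∫ ω, X j ω * X k ω * X i ω ^ 2 ∂μ = 0 := by
  have hg : Measurable fun p : ℝ × ℝ => p.1 * p.2 ^ 2 := by fun_prop
  by_cases hji : j = i
  · subst hji
    simpa [mul_comm, mul_left_comm, mul_assoc] using
      hX.integral_mul_comp_eq_zero hXm hjk.symm hjk.symm (hmean k) (hg := hg) (k := j) (l := j)
  · simpa [mul_assoc] using hX.integral_mul_comp_eq_zero hXm hjk hji (hmean j) hg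

lemma iIndepFun.integral_sq_mul_sq_of_ne (hX : iIndepFun X μ)
    (hXm : ∀ j, AEMeasurable (X j) μ) (hsq : ∀ j, ∫ ω, X j ω ^ 2 ∂μ = 1) {j i : ι}
    (hji : j ≠ i) :
    ∫ ω, X j ω ^ 2 * X i ω ^ 2 ∂μ = 1 := by
  have hg : Measurable fun x : ℝ => x ^ 2 := by fun_prop
  have hind := (hX.indepFun hji).comp₀ (hXm j) (hXm i) hg.aemeasurable hg.aemeasurable
  simpa [Function.comp_def, hsq] using hind.integral_mul_eq_mul_integral
    (hg.comp_aemeasurable (hXm j)).aestronglyMeasurable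
    (hg.comp_aemeasurable (hXm i)).aestronglyMeasurable

lemma memLp_two_mul (hX4 : ∀ j, MemLp (X j) 4 μ) (j i : ι) :
    MemLp (fun ω => X j ω * X i ω) 2 μ :=
  (hX4 i).mul' (hX4 j)

lemma integrable_mul_mul_sq (hX4 : ∀ j, MemLp (X j) 4 μ) (j k i : ι) :
    Integrable (fun ω => X j ω * X k ω * X i ω ^ 2) μ :=
  ((memLp_two_mul hX4 j i).integrable_mul (memLp_two_mul hX4 k i)).congr
    (ae_of_all _ fun ω => by simp only [Pi.mul_apply]; ring)

lemma memLp_two_sum_mul [Fintype ι] (hX4 : ∀ j, MemLp (X j) 4 μ) (a : ι → ℝ) (i : ι) :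
    MemLp (fun ω => (∑ j, a j * X j ω) * X i ω) 2 μ := by
  simp_rw [Finset.sum_mul, mul_assoc]
  exact memLp_finsetSum _ fun j _ => (memLp_two_mul hX4 j i).const_mul (a j)

variable [IsProbabilityMeasure μ]

lemma integral_sq_mul_sq_eq_variance_add_one {Y : Ω → ℝ} (hY : MemLp Y 4 μ)
    (hsq : ∫ ω, Y ω ^ 2 ∂μ = 1) :
    ∫ ω, Y ω ^ 2 * Y ω ^ 2 ∂μ = variance (fun ω => Y ω ^ 2) μ + 1 := by
  have hY2 : MemLp (fun ω => Y ω ^ 2) 2 μ := by simpa [sq] using hY.mul' hY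
  rw [variance_eq_sub hY2]
  simp [Pi.pow_apply, hsq, ← sq]

lemma iIndepFun.integral_mul_mul_sq [DecidableEq ι] (hX : iIndepFun X μ)
    (hX4 : ∀ j, MemLp (X j) 4 μ) (hmean : ∀ j, ∫ ω, X j ω ∂μ = 0)
    (hsq : ∀ j, ∫ ω, X j ω ^ 2 ∂μ = 1) (j k i : ι) :
    ∫ ω, X j ω * X k ω * X i ω ^ 2 ∂μ
      = if j = k then 1 + if j = i then variance (fun ω => X i ω ^ 2) μ else 0 else 0 := by
  have hXm : ∀ j, AEMeasurable (X j) μ := fun j => (hX4 j).aemeasurable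
  by_cases hjk : j = k
  · subst hjk
    simp only [← sq, if_true]
    by_cases hji : j = i
    · subst hji
      simp [integral_sq_mul_sq_eq_variance_add_one (hX4 j) (hsq j), add_comm]
    · simp [hji, hX.integral_sq_mul_sq_of_ne hXm hsq hji]
  · simp [hjk, hX.integral_mul_mul_sq_of_ne hXm hmean i hjk]

variable [Fintype ι]

lemma iIndepFun.integral_sum_mul_mul (hX : iIndepFun X μ) (hX4 : ∀ j, MemLp (X j) 4 μ)
    (hmean : ∀ j, ∫ ω, X j ω ∂μ = 0) (hsq : ∀ j, ∫ ω, X j ω ^ 2 ∂μ = 1) (a : ι → ℝ) (i : ι) :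
    ∫ ω, (∑ j, a j * X j ω) * X i ω ∂μ = a i := by
  classical
  have hXm : ∀ j, AEMeasurable (X j) μ := fun j => (hX4 j).aemeasurable
  have hmoment : ∀ j, ∫ ω, X j ω * X i ω ∂μ = if j = i then 1 else 0 := fun j => by
    split_ifs with hji
    · simpa [hji, sq] using hsq i
    · simpa using hX.integral_mul_comp_eq_zero hXm hji hji (hmean j) measurable_fst
  have hint : ∀ j, Integrable (fun ω => a j * (X j ω * X i ω)) μ := fun j =>
    ((memLp_two_mul hX4 j i).integrable one_le_two).const_mul _
  simp_rw [Finset.sum_mul, mul_assoc]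
  simp [integral_finsetSum _ fun j _ => hint j, integral_const_mul, hmoment]

lemma iIndepFun.integral_sum_mul_mul_sq (hX : iIndepFun X μ) (hX4 : ∀ j, MemLp (X j) 4 μ)
    (hmean : ∀ j, ∫ ω, X j ω ∂μ = 0) (hsq : ∀ j, ∫ ω, X j ω ^ 2 ∂μ = 1) (a : ι → ℝ) (i : ι) :
    ∫ ω, ((∑ j, a j * X j ω) * X i ω) ^ 2 ∂μ
      = ∑ j, a j ^ 2 + a i ^ 2 * variance (fun ω => X i ω ^ 2) μ := by
  classical
  have hexpand : ∀ ω, ((∑ j, a j * X j ω) * X i ω) ^ 2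
      = ∑ j, ∑ k, a j * a k * (X j ω * X k ω * X i ω ^ 2) := fun ω => by
    simp_rw [mul_pow, sq (∑ j, _), Finset.sum_mul_sum, Finset.sum_mul]
    exact Finset.sum_congr rfl fun j _ => Finset.sum_congr rfl fun k _ => by ring
  have hint : ∀ j k, Integrable (fun ω => a j * a k * (X j ω * X k ω * X i ω ^ 2)) μ :=
    fun j k => (integrable_mul_mul_sq hX4 j k i).const_mul _
  simp_rw [hexpand]
  rw [integral_finsetSum _ fun j _ => integrable_finsetSum _ fun k _ => hint j k]
  simp_rw [integral_finsetSum _ fun k _ => hint _ k, integral_const_mul,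
    hX.integral_mul_mul_sq hX4 hmean hsq]
  simp [mul_add, Finset.sum_add_distrib, sq]

lemma iIndepFun.integral_cv_forward_gradient_sq (hX : iIndepFun X μ)
    (hX4 : ∀ j, MemLp (X j) 4 μ) (hmean : ∀ j, ∫ ω, X j ω ∂μ = 0)
    (hsq : ∀ j, ∫ ω, X j ω ^ 2 ∂μ = 1) (g ĝ : ι → ℝ) (i : ι) :
    ∫ ω, ((∑ j, g j * X j ω) * X i ω - (∑ j, ĝ j * X j ω) * X i ω + ĝ i) ^ 2 ∂μ
      = (g i - ĝ i) ^ 2 * variance (fun ω => X i ω ^ 2) μ + ∑ j, (g j - ĝ j) ^ 2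
        + 2 * g i * ĝ i - ĝ i ^ 2 := by
  set S : Ω → ℝ := fun ω => (∑ j, (g j - ĝ j) * X j ω) * X i ω with hS
  have hS2 : MemLp S 2 μ := memLp_two_sum_mul hX4 _ i
  have hS1 : Integrable (fun ω => 2 * ĝ i * S ω) μ := (hS2.integrable one_le_two).const_mul _
  have hlin : Integrable (fun ω => 2 * ĝ i * S ω + ĝ i ^ 2) μ := hS1.add (integrable_const _)
  have hsplit : ∀ ω, ((∑ j, g j * X j ω) * X i ω - (∑ j, ĝ j * X j ω) * X i ω + ĝ i) ^ 2
      = S ω ^ 2 + (2 * ĝ i * S ω + ĝ i ^ 2) := fun ω => by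
    simp only [hS, sub_mul, Finset.sum_sub_distrib]
    ring
  simp_rw [hsplit]
  rw [integral_add hS2.integrable_sq hlin,
    integral_add hS1 (integrable_const _), integral_const_mul, hS,
    hX.integral_sum_mul_mul_sq hX4 hmean hsq, hX.integral_sum_mul_mul hX4 hmean hsq]
  simp only [integral_const, probReal_univ, smul_eq_mul, one_mul]
  ring

end ProbabilityTheory

theorem cv_forward_gradient_component_second_moment_general
    {Ω : Type*} [MeasurableSpace Ω] {μ : Measure Ω} [IsProbabilityMeasure μ]
    {d : ℕ} (f fhat : EuclideanSpace ℝ (Fin d) → ℝ) (θ : EuclideanSpace ℝ (Fin d))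
    (v : Ω → EuclideanSpace ℝ (Fin d))
    (hindep : iIndepFun (fun i ω => v ω i) μ)
    (hL4 : ∀ i, MemLp (fun ω => v ω i) 4 μ)
    (hmean : ∀ i, ∫ ω, v ω i ∂μ = 0)
    (hvar : ∀ i, ∫ ω, (v ω i) ^ 2 ∂μ = 1) :
    ∀ i : Fin d,
      ∫ ω, (⟪gradient f θ, v ω⟫ * v ω i - ⟪gradient fhat θ, v ω⟫ * v ω i
            + gradient fhat θ i) ^ 2 ∂μ
        = (gradient f θ i - gradient fhat θ i) ^ 2 * variance (fun ω => (v ω i) ^ 2) μ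
          + ‖gradient f θ - gradient fhat θ‖ ^ 2
          + 2 * (gradient f θ i) * (gradient fhat θ i)
          - (gradient fhat θ i) ^ 2 := by
  intro i
  have hinner : ∀ (x : EuclideanSpace ℝ (Fin d)) ω, ⟪x, v ω⟫ = ∑ j, x j * v ω j := fun x ω => by
    simp [PiLp.inner_apply, mul_comm]
  simp_rw [hinner, EuclideanSpace.real_norm_sq_eq, PiLp.sub_apply]
  exact hindep.integral_cv_forward_gradient_sq hL4 hmean hvar _ _ i

/-- **Second moment of a component of the control variate forward gradient.**
If the components of `v` are independent with zero mean and unit variance, then for each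
`i`, `E[(h_v(θ))_i²] = (∂_i f(θ) − ∂_i f̂(θ))² Var[v_i²] + ‖∇f(θ) − ∇f̂(θ)‖²
+ 2 ∂_i f(θ) ∂_i f̂(θ) − (∂_i f̂(θ))²`, where
`(h_v(θ))_i = (∇f(θ)·v) v_i − (∇f̂(θ)·v) v_i + ∂_i f̂(θ)`. -/
theorem cv_forward_gradient_component_second_moment
    {Ω : Type*} [MeasurableSpace Ω] {μ : Measure Ω} [IsProbabilityMeasure μ]
    {d : ℕ} (f fhat : EuclideanSpace ℝ (Fin d) → ℝ) (θ : EuclideanSpace ℝ (Fin d))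
    (hf : DifferentiableAt ℝ f θ) (hfhat : DifferentiableAt ℝ fhat θ)
    (v : Ω → EuclideanSpace ℝ (Fin d)) (hmeas : Measurable v)
    (hindep : iIndepFun (fun i ω => v ω i) μ)
    (hL4 : ∀ i, MemLp (fun ω => v ω i) 4 μ)
    (hmean : ∀ i, ∫ ω, v ω i ∂μ = 0)
    (hvar : ∀ i, ∫ ω, (v ω i) ^ 2 ∂μ = 1) :
    ∀ i : Fin d,
      ∫ ω, (⟪gradient f θ, v ω⟫ * v ω i - ⟪gradient fhat θ, v ω⟫ * v ω i
            + gradient fhat θ i) ^ 2 ∂μ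
        = (gradient f θ i - gradient fhat θ i) ^ 2 * variance (fun ω => (v ω i) ^ 2) μ
          + ‖gradient f θ - gradient fhat θ‖ ^ 2
          + 2 * (gradient f θ i) * (gradient fhat θ i)
          - (gradient fhat θ i) ^ 2 :=
  cv_forward_gradient_component_second_moment_general f fhat θ v hindep hL4 hmean hvar
end

section
/- Let f : ℝ^d → ℝ be L-smooth, let f̂ : ℝ^d → ℝ be differentiable, let ε > 0, let θ ∈ ℝ^d, and let v be a random vector in ℝ^d with independent Rademacher components. Then the bias of the finite-difference control variate forward gradient h_{v,ε}(θ) = ((f(θ+εv) − f(θ))/ε) v − (∇f̂(θ)·v)v + ∇f̂(θ) satisfies ‖E[h_{v,ε}(θ)] − ∇f(θ)‖ ≤ ε L d^{3/2} / 2. -/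
open MeasureTheory ProbabilityTheory
open scoped RealInnerProductSpace

/-!
Write the difference quotient as `⟪∇f θ, v⟫ + R(v)`; the second-order Taylor bound for an
`L`-smooth function gives `|R(v)| ≤ ε L ‖v‖² / 2`. A Rademacher vector is isotropic,
`E[⟪c, v⟫ v] = c`, so `h_{v,ε}(θ) = R(v) v + ⟪∇f θ - ∇f̂ θ, v⟫ v + ∇f̂ θ` has expectation
`E[R(v) v] + ∇f θ`, and the bias `E[R(v) v]` has norm at most `ε L ‖v‖³ / 2 = ε L d^{3/2} / 2`
because `‖v‖ = √d` almost surely.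
-/

section Smooth

variable {E : Type*} [NormedAddCommGroup E] [InnerProductSpace ℝ E] [CompleteSpace E]
  {f : E → ℝ} {L : ℝ}

theorem abs_sub_sub_inner_gradient_le (hf : Differentiable ℝ f)
    (hlip : ∀ x y, ‖gradient f x - gradient f y‖ ≤ L * ‖x - y‖) (x u : E) :
    |f (x + u) - f x - ⟪gradient f x, u⟫| ≤ L / 2 * ‖u‖ ^ 2 := by
  set φ : ℝ → ℝ := fun t => f (x + t • u) - f x - t * ⟪gradient f x, u⟫
  have hφ : ∀ t, HasDerivAt φ ⟪gradient f (x + t • u) - gradient f x, u⟫ t := fun t => by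
    have hline : HasDerivAt (fun s : ℝ => x + s • u) u t := by
      simpa using ((hasDerivAt_id t).smul_const u).const_add x
    have hcomp := (hf (x + t • u)).hasGradientAt.hasFDerivAt.comp_hasDerivAt t hline
    rw [InnerProductSpace.toDual_apply_apply] at hcomp
    rw [inner_sub_left]
    exact ((hcomp.sub_const (f x)).sub ((hasDerivAt_id' t).mul_const _)).congr_deriv (by ring)
  have hbound : ∀ t ∈ Set.Ico (0 : ℝ) 1,
      ‖⟪gradient f (x + t • u) - gradient f x, u⟫‖ ≤ L * ‖u‖ ^ 2 * t := by
    rintro t ⟨ht, -⟩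
    calc ‖⟪gradient f (x + t • u) - gradient f x, u⟫‖
        ≤ ‖gradient f (x + t • u) - gradient f x‖ * ‖u‖ := norm_inner_le_norm _ _
      _ ≤ L * ‖t • u‖ * ‖u‖ := by
        gcongr
        simpa using hlip (x + t • u) x
      _ = L * ‖u‖ ^ 2 * t := by rw [norm_smul, Real.norm_of_nonneg ht]; ring
  have hB : ∀ t, HasDerivAt (fun t => L / 2 * ‖u‖ ^ 2 * t ^ 2) (L * ‖u‖ ^ 2 * t) t := fun t =>
    ((hasDerivAt_pow 2 t).const_mul (L / 2 * ‖u‖ ^ 2)).congr_deriv (by push_cast; ring)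
  have := image_norm_le_of_norm_deriv_right_le_deriv_boundary
    (fun t _ => (hφ t).continuousAt.continuousWithinAt) (fun t _ => (hφ t).hasDerivWithinAt)
    (by simp [φ]) hB hbound (Set.right_mem_Icc.2 zero_le_one)
  simpa [φ] using this

theorem abs_slope_sub_inner_gradient_le (hf : Differentiable ℝ f)
    (hlip : ∀ x y, ‖gradient f x - gradient f y‖ ≤ L * ‖x - y‖) {ε : ℝ} (hε : 0 < ε) (x u : E) :
    |(f (x + ε • u) - f x) / ε - ⟪gradient f x, u⟫| ≤ ε * L / 2 * ‖u‖ ^ 2 := by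
  have h := abs_sub_sub_inner_gradient_le hf hlip x (ε • u)
  rw [real_inner_smul_right, norm_smul, Real.norm_of_nonneg hε.le] at h
  rw [← mul_le_mul_iff_of_pos_left hε, ← abs_of_pos hε, ← abs_mul, abs_of_pos hε]
  calc |ε * ((f (x + ε • u) - f x) / ε - ⟪gradient f x, u⟫)|
      = |f (x + ε • u) - f x - ε * ⟪gradient f x, u⟫| := by field_simp
    _ ≤ ε * (ε * L / 2 * ‖u‖ ^ 2) := h.trans_eq (by ring)

noncomputable def fdCVForwardGradient (f fhat : E → ℝ) (ε : ℝ) (θ v : E) : E :=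
  ((f (θ + ε • v) - f θ) / ε) • v - ⟪gradient fhat θ, v⟫ • v + gradient fhat θ

theorem norm_integral_fdCVForwardGradient_sub_gradient_le {Ω : Type*} [MeasurableSpace Ω]
    {μ : Measure Ω} [IsProbabilityMeasure μ] (hL : 0 ≤ L) (hf : Differentiable ℝ f)
    (hlip : ∀ x y, ‖gradient f x - gradient f y‖ ≤ L * ‖x - y‖) (fhat : E → ℝ) {ε : ℝ}
    (hε : 0 < ε) (θ : E) {v : Ω → E} (hv : AEStronglyMeasurable v μ) {r : ℝ}
    (hvr : ∀ᵐ ω ∂μ, ‖v ω‖ ≤ r) (hiso : ∀ c, ∫ ω, ⟪c, v ω⟫ • v ω ∂μ = c) :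
    ‖∫ ω, fdCVForwardGradient f fhat ε θ (v ω) ∂μ - gradient f θ‖ ≤ ε * L * r ^ 3 / 2 := by
  set R : E → ℝ := fun u => (f (θ + ε • u) - f θ) / ε - ⟪gradient f θ, u⟫
  have hsplit : ∀ ω, fdCVForwardGradient f fhat ε θ (v ω) = R (v ω) • v ω
      + (⟪gradient f θ - gradient fhat θ, v ω⟫ • v ω + gradient fhat θ) := fun ω => by
    simp only [fdCVForwardGradient, R, inner_sub_left, sub_smul]
    abel
  have hRv : ∀ᵐ ω ∂μ, ‖R (v ω) • v ω‖ ≤ ε * L * r ^ 3 / 2 := by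
    filter_upwards [hvr] with ω hω
    rw [norm_smul, Real.norm_eq_abs]
    calc |R (v ω)| * ‖v ω‖ ≤ ε * L / 2 * ‖v ω‖ ^ 2 * ‖v ω‖ := by
          gcongr
          exact abs_slope_sub_inner_gradient_le hf hlip hε θ (v ω)
      _ = ε * L / 2 * ‖v ω‖ ^ 3 := by ring
      _ ≤ ε * L / 2 * r ^ 3 := by
          have : 0 ≤ ε * L / 2 := by have := mul_nonneg hε.le hL; positivity
          gcongr
      _ = ε * L * r ^ 3 / 2 := by ring
  have hR_cont : Continuous R := by
    have := hf.continuous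
    simp only [R]
    fun_prop
  have hRv_int : Integrable (fun ω => R (v ω) • v ω) μ :=
    .of_bound ((hR_cont.comp_aestronglyMeasurable hv).smul hv) _ hRv
  have hcv_int : ∀ c, Integrable (fun ω => ⟪c, v ω⟫ • v ω) μ := fun c => by
    refine .of_bound ((aestronglyMeasurable_const.inner hv).smul hv) (‖c‖ * r ^ 2) ?_
    filter_upwards [hvr] with ω hω
    rw [norm_smul]
    calc ‖⟪c, v ω⟫‖ * ‖v ω‖ ≤ ‖c‖ * ‖v ω‖ * ‖v ω‖ := by gcongr; exact norm_inner_le_norm _ _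
      _ ≤ ‖c‖ * r ^ 2 := by rw [mul_assoc, ← sq]; gcongr
  have hcv_add_int : Integrable
      (fun ω => ⟪gradient f θ - gradient fhat θ, v ω⟫ • v ω + gradient fhat θ) μ :=
    (hcv_int _).add (integrable_const _)
  calc ‖∫ ω, fdCVForwardGradient f fhat ε θ (v ω) ∂μ - gradient f θ‖
      = ‖∫ ω, R (v ω) • v ω ∂μ‖ := by
        rw [integral_congr_ae (.of_forall hsplit), integral_add hRv_int hcv_add_int,
          integral_add (hcv_int _) (integrable_const _),
          hiso, integral_const]
        simp
    _ ≤ ε * L * r ^ 3 / 2 := by simpa using norm_integral_le_of_norm_le_const hRv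

end Smooth

theorem integral_inner_smul_eq_of_orthonormalBasis {E : Type*} [NormedAddCommGroup E]
    [InnerProductSpace ℝ E] [CompleteSpace E] {Ω : Type*} [MeasurableSpace Ω] {μ : Measure Ω}
    {ι : Type*} [Fintype ι] [DecidableEq ι] (b : OrthonormalBasis ι ℝ E) {v : Ω → E}
    (hint : ∀ i j, Integrable (fun ω => ⟪b i, v ω⟫ * ⟪b j, v ω⟫) μ)
    (hcov : ∀ i j, ∫ ω, ⟪b i, v ω⟫ * ⟪b j, v ω⟫ ∂μ = if i = j then 1 else 0) (c : E) :
    ∫ ω, ⟪c, v ω⟫ • v ω ∂μ = c := by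
  have hexpand : ∀ ω, ⟪c, v ω⟫ • v ω
      = ∑ i, (∑ j, ⟪c, b j⟫ * (⟪b j, v ω⟫ * ⟪b i, v ω⟫)) • b i := fun ω => by
    calc ⟪c, v ω⟫ • v ω = (∑ j, ⟪c, b j⟫ * ⟪b j, v ω⟫) • ∑ i, ⟪b i, v ω⟫ • b i := by
          rw [b.sum_inner_mul_inner, b.sum_repr']
      _ = _ := by simp only [Finset.smul_sum, smul_smul, Finset.sum_mul, mul_assoc]
  calc ∫ ω, ⟪c, v ω⟫ • v ω ∂μ
      = ∑ i, (∑ j, ⟪c, b j⟫ * ∫ ω, ⟪b j, v ω⟫ * ⟪b i, v ω⟫ ∂μ) • b i := by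
        simp_rw [hexpand]
        rw [integral_finsetSum _ fun i _ =>
          (integrable_finsetSum _ fun j _ => (hint j i).const_mul _).smul_const _]
        refine Finset.sum_congr rfl fun i _ => ?_
        rw [integral_smul_const, integral_finsetSum _ fun j _ => (hint j i).const_mul _]
        simp_rw [integral_const_mul]
    _ = c := by
        simp only [hcov, mul_ite, mul_one, mul_zero, Finset.sum_ite_eq', Finset.mem_univ, if_true]
        simp_rw [real_inner_comm _ c]
        exact b.sum_repr' c

section Rademacher

variable {Ω : Type*} [MeasurableSpace Ω] {μ : Measure Ω} [IsProbabilityMeasure μ]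

theorem ae_eq_one_or_eq_neg_one_of_measure_eq_half {X : Ω → ℝ} (hX : Measurable X)
    (h₁ : μ {ω | X ω = 1} = 1 / 2) (h₂ : μ {ω | X ω = -1} = 1 / 2) :
    ∀ᵐ ω ∂μ, X ω = 1 ∨ X ω = -1 := by
  have hmeas : ∀ a : ℝ, MeasurableSet {ω | X ω = a} := fun a => hX (measurableSet_singleton a)
  have hdisj : Disjoint {ω | X ω = 1} {ω | X ω = -1} :=
    Set.disjoint_left.2 fun ω (h₁ : X ω = 1) (h₂ : X ω = -1) => by norm_num [h₁] at h₂
  rw [ae_iff_measure_eq (p := fun ω => X ω = 1 ∨ X ω = -1)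
      ((hmeas 1).union (hmeas (-1))).nullMeasurableSet, Set.ofPred_or,
    measure_union hdisj (hmeas (-1)), h₁, h₂, ENNReal.add_halves, measure_univ]

theorem integral_eq_zero_of_measure_eq_half {X : Ω → ℝ} (hX : Measurable X)
    (h₁ : μ {ω | X ω = 1} = 1 / 2) (h₂ : μ {ω | X ω = -1} = 1 / 2) : ∫ ω, X ω ∂μ = 0 := by
  have hX_eq : X =ᵐ[μ] fun ω => 2 * {ω | X ω = 1}.indicator 1 ω - 1 := by
    filter_upwards [ae_eq_one_or_eq_neg_one_of_measure_eq_half hX h₁ h₂] with ω hω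
    rcases hω with h | h <;> norm_num [h, Set.indicator_apply]
  have hmeas : MeasurableSet {ω | X ω = 1} := hX (measurableSet_singleton 1)
  rw [integral_congr_ae hX_eq, integral_sub ((integrable_indicator_iff hmeas).2
    (integrable_const 1).integrableOn |>.const_mul 2) (integrable_const 1), integral_const_mul,
    integral_indicator_one hmeas, measureReal_def, h₁]
  simp

theorem integral_mul_eq_ite_of_iIndepFun {ι : Type*} [DecidableEq ι] {X : ι → Ω → ℝ}
    (hX : ∀ i, Measurable (X i)) (hindep : iIndepFun X μ)
    (hpm : ∀ i, ∀ᵐ ω ∂μ, X i ω = 1 ∨ X i ω = -1) (hmean : ∀ i, ∫ ω, X i ω ∂μ = 0) (i j : ι) :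
    ∫ ω, X i ω * X j ω ∂μ = if i = j then 1 else 0 := by
  split_ifs with hij
  · subst hij
    have hsq : (fun ω => X i ω * X i ω) =ᵐ[μ] fun _ => 1 := by
      filter_upwards [hpm i] with ω hω
      rcases hω with h | h <;> simp [h]
    simp [integral_congr_ae hsq]
  · have := (hindep.indepFun hij).integral_mul_eq_mul_integral (hX i).aestronglyMeasurable
      (hX j).aestronglyMeasurable
    simpa [hmean] using this

end Rademacher

theorem EuclideanSpace.norm_eq_sqrt_card {ι : Type*} [Fintype ι] {x : EuclideanSpace ℝ ι}
    (hx : ∀ i, x i = 1 ∨ x i = -1) : ‖x‖ = √(Fintype.card ι) := by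
  have hsq : ∀ i, x i ^ 2 = 1 := fun i => by rcases hx i with h | h <;> simp [h]
  simp [EuclideanSpace.norm_eq, hsq]

theorem fd_cv_forward_gradient_bias_bound_general
    {Ω : Type*} [MeasurableSpace Ω] {μ : Measure Ω} [IsProbabilityMeasure μ]
    {d : ℕ} (f fhat : EuclideanSpace ℝ (Fin d) → ℝ) (L : ℝ) (hL : 0 ≤ L)
    (hf : Differentiable ℝ f)
    (hlip : ∀ x y, ‖gradient f x - gradient f y‖ ≤ L * ‖x - y‖)
    (ε : ℝ) (hε : 0 < ε) (θ : EuclideanSpace ℝ (Fin d))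
    (v : Ω → EuclideanSpace ℝ (Fin d)) (hmeas : Measurable v)
    (hindep : iIndepFun (fun i ω => v ω i) μ)
    (hrad : ∀ i, μ {ω | v ω i = 1} = 1/2 ∧ μ {ω | v ω i = -1} = 1/2) :
    ‖(∫ ω, (((f (θ + ε • v ω) - f θ) / ε) • v ω - ⟪gradient fhat θ, v ω⟫ • v ω
        + gradient fhat θ) ∂μ) - gradient f θ‖
      ≤ ε * L * (d : ℝ) ^ ((3 : ℝ) / 2) / 2 := by
  have hcoord : ∀ i, Measurable fun ω => v ω i := fun i => by fun_prop
  have hpm : ∀ i, ∀ᵐ ω ∂μ, v ω i = 1 ∨ v ω i = -1 := fun i =>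
    ae_eq_one_or_eq_neg_one_of_measure_eq_half (hcoord i) (hrad i).1 (hrad i).2
  have hnorm : ∀ᵐ ω ∂μ, ‖v ω‖ ≤ √d := by
    filter_upwards [ae_all_iff.2 hpm] with ω hω
    simpa using (EuclideanSpace.norm_eq_sqrt_card hω).le
  have hint : ∀ i j, Integrable (fun ω => v ω i * v ω j) μ := fun i j => by
    refine .of_bound ((hcoord i).mul (hcoord j)).aestronglyMeasurable 1 ?_
    filter_upwards [hpm i, hpm j] with ω hi hj
    rcases hi with hi | hi <;> rcases hj with hj | hj <;> simp [hi, hj]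
  have hcov := integral_mul_eq_ite_of_iIndepFun hcoord hindep hpm fun i =>
    integral_eq_zero_of_measure_eq_half (hcoord i) (hrad i).1 (hrad i).2
  have hiso := integral_inner_smul_eq_of_orthonormalBasis (EuclideanSpace.basisFun (Fin d) ℝ)
    (by simpa only [EuclideanSpace.basisFun_inner] using hint)
    (by simpa only [EuclideanSpace.basisFun_inner] using hcov)
  have hbias := norm_integral_fdCVForwardGradient_sub_gradient_le hL hf hlip fhat hε θ
    hmeas.aestronglyMeasurable hnorm hiso
  have hpow : √(d : ℝ) ^ 3 = (d : ℝ) ^ ((3 : ℝ) / 2) := by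
    rw [Real.sqrt_eq_rpow, ← Real.rpow_natCast, ← Real.rpow_mul (Nat.cast_nonneg d)]
    norm_num
  rwa [hpow] at hbias

/-- **Bias bound for the finite-difference control variate forward gradient.**
If `f` is `L`-smooth, `f̂` differentiable, `ε > 0`, and `v` has independent Rademacher
components, then the bias of
`h_{v,ε}(θ) = ((f(θ+εv) − f(θ))/ε) v − (∇f̂(θ)·v)v + ∇f̂(θ)` satisfies
`‖E[h_{v,ε}(θ)] − ∇f(θ)‖ ≤ ε L d^{3/2} / 2`. -/
theorem fd_cv_forward_gradient_bias_bound
    {Ω : Type*} [MeasurableSpace Ω] {μ : Measure Ω} [IsProbabilityMeasure μ]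
    {d : ℕ} (f fhat : EuclideanSpace ℝ (Fin d) → ℝ) (L : ℝ) (hL : 0 ≤ L)
    (hf : Differentiable ℝ f)
    (hlip : ∀ x y, ‖gradient f x - gradient f y‖ ≤ L * ‖x - y‖)
    (hfhat : Differentiable ℝ fhat)
    (ε : ℝ) (hε : 0 < ε) (θ : EuclideanSpace ℝ (Fin d))
    (v : Ω → EuclideanSpace ℝ (Fin d)) (hmeas : Measurable v)
    (hindep : iIndepFun (fun i ω => v ω i) μ)
    (hrad : ∀ i, μ {ω | v ω i = 1} = 1/2 ∧ μ {ω | v ω i = -1} = 1/2) :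
    ‖(∫ ω, (((f (θ + ε • v ω) - f θ) / ε) • v ω - ⟪gradient fhat θ, v ω⟫ • v ω
        + gradient fhat θ) ∂μ) - gradient f θ‖
      ≤ ε * L * (d : ℝ) ^ ((3 : ℝ) / 2) / 2 :=
  fd_cv_forward_gradient_bias_bound_general f fhat L hL hf hlip ε hε θ v hmeas hindep hrad
end

section
/- Let f : ℝ^d → ℝ be differentiable, let f̂ : ℝ^d → ℝ be differentiable, let ε > 0, let θ ∈ ℝ^d, and let v be a random vector in ℝ^d with independent Rademacher components. Define D_{v,ε}(θ) = (f(θ + εv) − f(θ))/ε − ∇f(θ)·v and h_{v,ε}(θ) = ((f(θ+εv) − f(θ))/ε) v − (∇f̂(θ)·v)v + ∇f̂(θ). Then the exact mean-squared-error decomposition holds: E[‖h_{v,ε}(θ) − ∇f(θ)‖²] = d · E[D_{v,ε}(θ)²] + 2 (d − 1) E[D_{v,ε}(θ) v] · (∇f(θ) − ∇f̂(θ)) + (d − 1) ‖∇f(θ) − ∇f̂(θ)‖². -/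
open MeasureTheory ProbabilityTheory
open scoped RealInnerProductSpace

/-!
Write `D = (f(θ + εv) - f θ)/ε - ⟪∇f, v⟫` and `s = ⟪∇f - ∇f̂, v⟫`. Then
`h - ∇f = (D + s) • v - (∇f - ∇f̂)`, and as `‖v‖² = d` this gives pointwise
`‖h - ∇f‖² = d D² + 2(d-1) D s + (d-2) s² + ‖∇f - ∇f̂‖²`.
In expectation `E[D s] = ⟪E[D v], ∇f - ∇f̂⟫`, and `E[s²] = ‖∇f - ∇f̂‖²` because independent
mean-zero coordinates with `vᵢ² = 1` give `E[vᵢ vⱼ] = δᵢⱼ`. Integrability is never an issue: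
`v` takes only finitely many values, so every function of `v` is integrable.
-/

def IsRademacher {Ω : Type*} [MeasurableSpace Ω] (X : Ω → ℝ) (μ : Measure Ω) : Prop :=
  μ {ω | X ω = 1} = 1 / 2 ∧ μ {ω | X ω = -1} = 1 / 2

section

variable {Ω : Type*} [MeasurableSpace Ω] {μ : Measure Ω}

theorem integrable_comp_of_ae_mem_finite [IsFiniteMeasure μ] {E F : Type*} [MeasurableSpace E]
    [MeasurableSingletonClass E] [NormedAddCommGroup F] {v : Ω → E} (hv : Measurable v)
    {K : Set E} (hK : K.Finite) (hvK : ∀ᵐ ω ∂μ, v ω ∈ K) (φ : E → F) :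
    Integrable (fun ω => φ (v ω)) μ := by
  refine (integrable_finsetSum hK.toFinset fun k _ =>
    (integrable_const (φ k)).indicator (hv (measurableSet_singleton k))).congr ?_
  filter_upwards [hvK] with ω hω
  rw [Finset.sum_eq_single (v ω)]
  · simp
  · intro k _ hk
    exact Set.indicator_of_notMem (Ne.symm hk) _
  · exact fun h => absurd (hK.mem_toFinset.2 hω) h

variable [IsProbabilityMeasure μ] {X : Ω → ℝ}

theorem IsRademacher.ae_eq_one_or_eq_neg_one (hX : Measurable X) (hrad : IsRademacher X μ) :
    ∀ᵐ ω ∂μ, X ω = 1 ∨ X ω = -1 := by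
  have hA : MeasurableSet {ω | X ω = 1} := hX (measurableSet_singleton 1)
  have hB : MeasurableSet {ω | X ω = -1} := hX (measurableSet_singleton (-1))
  have hdisj : Disjoint {ω | X ω = 1} {ω | X ω = -1} :=
    Set.disjoint_left.2 fun ω (h₁ : X ω = 1) (h₂ : X ω = -1) => by norm_num [h₁] at h₂
  refine (ae_mem_iff_measure_eq (hA.union hB).nullMeasurableSet).2 ?_
  rw [measure_union hdisj hB, hrad.1, hrad.2, ENNReal.add_halves, measure_univ]

theorem IsRademacher.integral_eq_zero (hX : Measurable X) (hrad : IsRademacher X μ) :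
    ∫ ω, X ω ∂μ = 0 := by
  have hA : MeasurableSet {ω | X ω = 1} := hX (measurableSet_singleton 1)
  have hB : MeasurableSet {ω | X ω = -1} := hX (measurableSet_singleton (-1))
  have hsplit : X =ᵐ[μ] fun ω => {ω | X ω = 1}.indicator 1 ω - {ω | X ω = -1}.indicator 1 ω := by
    filter_upwards [hrad.ae_eq_one_or_eq_neg_one hX] with ω hω
    rcases hω with h | h <;> norm_num [Set.indicator, h]
  rw [integral_congr_ae hsplit, integral_sub ((integrable_const 1).indicator hA)
      ((integrable_const 1).indicator hB), integral_indicator_one hA, integral_indicator_one hB,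
    measureReal_def, measureReal_def, hrad.1, hrad.2, sub_self]

end

def signVectors (ι : Type*) : Set (EuclideanSpace ℝ ι) := {x | ∀ i, x i = 1 ∨ x i = -1}

theorem finite_signVectors (ι : Type*) [Finite ι] : (signVectors ι).Finite := by
  refine ((Set.Finite.pi fun _ => ({1, -1} : Set ℝ).toFinite).image (WithLp.toLp 2)).subset ?_
  exact fun x hx => ⟨x.ofLp, fun i _ => hx i, rfl⟩

theorem norm_sq_of_mem_signVectors {ι : Type*} [Fintype ι] {x : EuclideanSpace ℝ ι}
    (hx : x ∈ signVectors ι) : ‖x‖ ^ 2 = Fintype.card ι := by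
  rw [EuclideanSpace.norm_sq_eq]
  calc ∑ i, ‖x i‖ ^ 2 = ∑ _i : ι, (1 : ℝ) :=
        Finset.sum_congr rfl fun i _ => by rcases hx i with h | h <;> simp [h]
    _ = Fintype.card ι := by simp

theorem norm_sq_controlVariate_sub_eq {E : Type*} [NormedAddCommGroup E] [InnerProductSpace ℝ E]
    (q : ℝ) (x g ĝ : E) :
    ‖(q • x - ⟪ĝ, x⟫ • x + ĝ) - g‖ ^ 2
      = ‖x‖ ^ 2 * (q - ⟪g, x⟫) ^ 2 + 2 * (‖x‖ ^ 2 - 1) * ((q - ⟪g, x⟫) * ⟪g - ĝ, x⟫)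
        + (‖x‖ ^ 2 - 2) * ⟪g - ĝ, x⟫ ^ 2 + ‖g - ĝ‖ ^ 2 := by
  have hvec : (q • x - ⟪ĝ, x⟫ • x + ĝ) - g = (q - ⟪g, x⟫ + ⟪g - ĝ, x⟫) • x - (g - ĝ) := by
    rw [inner_sub_left]
    module
  rw [hvec, norm_sub_sq_real, real_inner_smul_left, norm_smul, Real.norm_eq_abs, mul_pow, sq_abs,
    real_inner_comm (g - ĝ) x]
  ring

section

variable {Ω : Type*} [MeasurableSpace Ω] {μ : Measure Ω} [IsProbabilityMeasure μ]
  {ι : Type*} [Fintype ι] {v : Ω → EuclideanSpace ℝ ι}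

theorem ae_mem_signVectors (hv : Measurable v)
    (hrad : ∀ i, IsRademacher (fun ω => v ω i) μ) :
    ∀ᵐ ω ∂μ, v ω ∈ signVectors ι :=
  ae_all_iff.2 fun i => (hrad i).ae_eq_one_or_eq_neg_one (by fun_prop)

theorem integrable_comp_of_isRademacher {F : Type*} [NormedAddCommGroup F] (hv : Measurable v)
    (hrad : ∀ i, IsRademacher (fun ω => v ω i) μ) (φ : EuclideanSpace ℝ ι → F) :
    Integrable (fun ω => φ (v ω)) μ :=
  integrable_comp_of_ae_mem_finite hv (finite_signVectors ι) (ae_mem_signVectors hv hrad) φ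

theorem integral_coord_mul_coord [DecidableEq ι] (hv : Measurable v)
    (hindep : iIndepFun (fun i ω => v ω i) μ) (hrad : ∀ i, IsRademacher (fun ω => v ω i) μ)
    (i j : ι) :
    ∫ ω, v ω i * v ω j ∂μ = if i = j then 1 else 0 := by
  have hvi : ∀ i, Measurable fun ω => v ω i := fun i => by fun_prop
  split_ifs with hij
  · subst hij
    rw [integral_congr_ae (g := fun _ => (1 : ℝ)), integral_const, probReal_univ, one_smul]
    filter_upwards [ae_mem_signVectors hv hrad] with ω hω
    rcases hω i with h | h <;> norm_num [h]
  · rw [(hindep.indepFun hij).integral_fun_mul_eq_mul_integral (hvi i).aestronglyMeasurable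
      (hvi j).aestronglyMeasurable, (hrad i).integral_eq_zero (hvi i), zero_mul]

theorem integral_inner_sq_eq_norm_sq (hv : Measurable v)
    (hindep : iIndepFun (fun i ω => v ω i) μ) (hrad : ∀ i, IsRademacher (fun ω => v ω i) μ)
    (w : EuclideanSpace ℝ ι) :
    ∫ ω, ⟪w, v ω⟫ ^ 2 ∂μ = ‖w‖ ^ 2 := by
  classical
  calc ∫ ω, ⟪w, v ω⟫ ^ 2 ∂μ
      = ∫ ω, ∑ i, ∑ j, w i * w j * (v ω i * v ω j) ∂μ := by
        refine integral_congr_ae (.of_forall fun ω => ?_)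
        simp only [PiLp.inner_apply, RCLike.inner_apply, conj_trivial, sq, Finset.sum_mul_sum]
        exact Finset.sum_congr rfl fun i _ => Finset.sum_congr rfl fun j _ => by ring
    _ = ∑ i, ∑ j, w i * w j * ∫ ω, v ω i * v ω j ∂μ := by
        have hij : ∀ i j, Integrable (fun ω => w i * w j * (v ω i * v ω j)) μ :=
          fun i j => (integrable_comp_of_isRademacher hv hrad fun x => x i * x j).const_mul _
        rw [integral_finsetSum _ fun i _ => integrable_finsetSum _ fun j _ => hij i j]
        refine Finset.sum_congr rfl fun i _ => ?_
        rw [integral_finsetSum _ fun j _ => hij i j]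
        exact Finset.sum_congr rfl fun j _ => integral_const_mul _ _
    _ = ‖w‖ ^ 2 := by
        rw [EuclideanSpace.norm_sq_eq]
        simp [integral_coord_mul_coord hv hindep hrad, sq]

theorem integral_norm_sq_controlVariate_sub (hv : Measurable v)
    (hindep : iIndepFun (fun i ω => v ω i) μ) (hrad : ∀ i, IsRademacher (fun ω => v ω i) μ)
    (q : EuclideanSpace ℝ ι → ℝ) (g ĝ : EuclideanSpace ℝ ι) :
    ∫ ω, ‖(q (v ω) • v ω - ⟪ĝ, v ω⟫ • v ω + ĝ) - g‖ ^ 2 ∂μ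
      = Fintype.card ι * ∫ ω, (q (v ω) - ⟪g, v ω⟫) ^ 2 ∂μ
        + 2 * (Fintype.card ι - 1) * ⟪∫ ω, (q (v ω) - ⟪g, v ω⟫) • v ω ∂μ, g - ĝ⟫
        + (Fintype.card ι - 1) * ‖g - ĝ‖ ^ 2 := by
  have hint (φ : EuclideanSpace ℝ ι → ℝ) : Integrable (fun ω => φ (v ω)) μ :=
    integrable_comp_of_isRademacher hv hrad φ
  have hpoint : (fun ω => ‖(q (v ω) • v ω - ⟪ĝ, v ω⟫ • v ω + ĝ) - g‖ ^ 2) =ᵐ[μ] fun ω =>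
      Fintype.card ι * (q (v ω) - ⟪g, v ω⟫) ^ 2
        + 2 * (Fintype.card ι - 1) * ((q (v ω) - ⟪g, v ω⟫) * ⟪g - ĝ, v ω⟫)
        + (Fintype.card ι - 2) * ⟪g - ĝ, v ω⟫ ^ 2 + ‖g - ĝ‖ ^ 2 := by
    filter_upwards [ae_mem_signVectors hv hrad] with ω hω
    rw [norm_sq_controlVariate_sub_eq, norm_sq_of_mem_signVectors hω]
  have hcross : ∫ ω, (q (v ω) - ⟪g, v ω⟫) * ⟪g - ĝ, v ω⟫ ∂μ
      = ⟪∫ ω, (q (v ω) - ⟪g, v ω⟫) • v ω ∂μ, g - ĝ⟫ := by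
    rw [real_inner_comm, ← integral_inner
      (integrable_comp_of_isRademacher hv hrad fun x => (q x - ⟪g, x⟫) • x)]
    simp only [real_inner_smul_right]
  have i₁ : Integrable (fun ω => Fintype.card ι * (q (v ω) - ⟪g, v ω⟫) ^ 2) μ :=
    (hint fun x => (q x - ⟪g, x⟫) ^ 2).const_mul _
  have i₂ : Integrable
      (fun ω => 2 * (Fintype.card ι - 1) * ((q (v ω) - ⟪g, v ω⟫) * ⟪g - ĝ, v ω⟫)) μ :=
    (hint fun x => (q x - ⟪g, x⟫) * ⟪g - ĝ, x⟫).const_mul _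
  have i₃ : Integrable (fun ω => (Fintype.card ι - 2) * ⟪g - ĝ, v ω⟫ ^ 2) μ :=
    (hint fun x => ⟪g - ĝ, x⟫ ^ 2).const_mul _
  rw [integral_congr_ae hpoint, integral_add, integral_add, integral_add, integral_const_mul,
    integral_const_mul, integral_const_mul, integral_const, hcross,
    integral_inner_sq_eq_norm_sq hv hindep hrad, probReal_univ, one_smul]
  · ring
  all_goals fun_prop

end

theorem fd_cv_forward_gradient_mse_decomposition_general
    {Ω : Type*} [MeasurableSpace Ω] {μ : Measure Ω} [IsProbabilityMeasure μ]
    {d : ℕ} (f fhat : EuclideanSpace ℝ (Fin d) → ℝ)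
    (ε : ℝ) (θ : EuclideanSpace ℝ (Fin d))
    (v : Ω → EuclideanSpace ℝ (Fin d)) (hmeas : Measurable v)
    (hindep : iIndepFun (fun i ω => v ω i) μ)
    (hrad : ∀ i, μ {ω | v ω i = 1} = 1/2 ∧ μ {ω | v ω i = -1} = 1/2) :
    ∫ ω, ‖(((f (θ + ε • v ω) - f θ) / ε) • v ω - ⟪gradient fhat θ, v ω⟫ • v ω
          + gradient fhat θ) - gradient f θ‖ ^ 2 ∂μ
      = (d : ℝ) * ∫ ω, ((f (θ + ε • v ω) - f θ) / ε - ⟪gradient f θ, v ω⟫) ^ 2 ∂μ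
        + 2 * ((d : ℝ) - 1)
            * ⟪∫ ω, ((f (θ + ε • v ω) - f θ) / ε - ⟪gradient f θ, v ω⟫) • v ω ∂μ,
                gradient f θ - gradient fhat θ⟫
        + ((d : ℝ) - 1) * ‖gradient f θ - gradient fhat θ‖ ^ 2 := by
  simpa only [Fintype.card_fin] using integral_norm_sq_controlVariate_sub hmeas hindep hrad
    (fun x => (f (θ + ε • x) - f θ) / ε) (gradient f θ) (gradient fhat θ)

/-- **Exact mean-squared-error decomposition for the finite-difference control variate
forward gradient.**  For differentiable `f`, `f̂`, `ε > 0`, and `v` with independent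
Rademacher components, writing `D_{v,ε}(θ) = (f(θ+εv) − f(θ))/ε − ∇f(θ)·v` and
`h_{v,ε}(θ) = ((f(θ+εv) − f(θ))/ε) v − (∇f̂(θ)·v)v + ∇f̂(θ)`, we have
`E[‖h_{v,ε}(θ) − ∇f(θ)‖²] = d E[D_{v,ε}(θ)²]
+ 2(d−1) E[D_{v,ε}(θ) v] · (∇f(θ) − ∇f̂(θ)) + (d−1)‖∇f(θ) − ∇f̂(θ)‖²`. -/
theorem fd_cv_forward_gradient_mse_decomposition
    {Ω : Type*} [MeasurableSpace Ω] {μ : Measure Ω} [IsProbabilityMeasure μ]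
    {d : ℕ} (f fhat : EuclideanSpace ℝ (Fin d) → ℝ)
    (hf : Differentiable ℝ f) (hfhat : Differentiable ℝ fhat)
    (ε : ℝ) (hε : 0 < ε) (θ : EuclideanSpace ℝ (Fin d))
    (v : Ω → EuclideanSpace ℝ (Fin d)) (hmeas : Measurable v)
    (hindep : iIndepFun (fun i ω => v ω i) μ)
    (hrad : ∀ i, μ {ω | v ω i = 1} = 1/2 ∧ μ {ω | v ω i = -1} = 1/2) :
    ∫ ω, ‖(((f (θ + ε • v ω) - f θ) / ε) • v ω - ⟪gradient fhat θ, v ω⟫ • v ω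
          + gradient fhat θ) - gradient f θ‖ ^ 2 ∂μ
      = (d : ℝ) * ∫ ω, ((f (θ + ε • v ω) - f θ) / ε - ⟪gradient f θ, v ω⟫) ^ 2 ∂μ
        + 2 * ((d : ℝ) - 1)
            * ⟪∫ ω, ((f (θ + ε • v ω) - f θ) / ε - ⟪gradient f θ, v ω⟫) • v ω ∂μ,
                gradient f θ - gradient fhat θ⟫
        + ((d : ℝ) - 1) * ‖gradient f θ - gradient fhat θ‖ ^ 2 :=
  fd_cv_forward_gradient_mse_decomposition_general f fhat ε θ v hmeas hindep hrad
end
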